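/- The function F(ρ) = (π/√18)(3 − 4ρ(ρ−1))√(ρ(ρ−1)) + (π/√8)·arcsec(1 − 2ρ) is strictly monotonically decreasing for ρ ≥ 1, satisfies F(1) = π²/(2√2), and F(ρ) → −∞ as ρ → ∞. -/

import Mathlib

/-!
With `u = ρ(ρ - 1)`, so that `(2ρ - 1)² = 4u + 1`, the derivatives of the polynomial part and
of the arcsec part combine to `F'(ρ) = -4√2 π u √u / (2ρ - 1) < 0` for `ρ > 1`, which gives
strict monotonicity. At `ρ = 1` only the arcsec term survives, with `arcsec (-1) = π`. As
`ρ → ∞` the term `(3 - 4u)√u` tends to `-∞` while the arcsec term stays bounded by `π`.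
-/

open Real Filter

/-- The inverse secant function: `arcsec x = arccos (1/x)`. -/
noncomputable def arcsec (x : ℝ) : ℝ := Real.arccos x⁻¹

/-- The needle-energy function
`F(ρ) = (π/√18)(3 − 4ρ(ρ−1))√(ρ(ρ−1)) + (π/√8) arcsec(1 − 2ρ)`. -/
noncomputable def F (ρ : ℝ) : ℝ :=
  π / Real.sqrt 18 * (3 - 4 * ρ * (ρ - 1)) * Real.sqrt (ρ * (ρ - 1)) +
    π / Real.sqrt 8 * arcsec (1 - 2 * ρ)

theorem hasDerivAt_arcsec {x : ℝ} (hx : 1 < |x|) :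
    HasDerivAt arcsec (1 / (|x| * √(x ^ 2 - 1))) x := by
  have hx0 : x ≠ 0 := by rintro rfl; norm_num at hx
  have hinv : |x⁻¹| < 1 := by rw [abs_inv]; exact inv_lt_one_of_one_lt₀ hx
  have h : HasDerivAt arcsec _ x :=
    (hasDerivAt_arccos (abs_lt.1 hinv).1.ne' (abs_lt.1 hinv).2.ne).comp x (hasDerivAt_inv hx0)
  refine h.congr_deriv ?_
  have hs : 0 < √(x ^ 2 - 1) := Real.sqrt_pos.2 (by nlinarith [sq_abs x])
  have hsqrt : √(1 - x⁻¹ ^ 2) = √(x ^ 2 - 1) / |x| := by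
    rw [← Real.sqrt_sq (abs_nonneg x), ← Real.sqrt_div' _ (sq_nonneg _), sq_abs]
    congr 1; field_simp
  rw [hsqrt, ← sq_abs x]
  have ha : 0 < |x| := abs_pos.2 hx0
  field_simp

theorem continuousOn_arcsec : ContinuousOn arcsec {0}ᶜ :=
  continuous_arccos.comp_continuousOn continuousOn_inv₀

theorem arcsec_le_pi (x : ℝ) : arcsec x ≤ π := arccos_le_pi _

theorem arcsec_neg_one : arcsec (-1) = π := by simp [arcsec]

theorem sqrt_eighteen : √18 = 3 * √2 := by
  rw [show (18 : ℝ) = 3 ^ 2 * 2 by norm_num, Real.sqrt_mul (by positivity),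
    Real.sqrt_sq (by norm_num)]

theorem sqrt_eight : √8 = 2 * √2 := by
  rw [show (8 : ℝ) = 2 ^ 2 * 2 by norm_num, Real.sqrt_mul (by positivity),
    Real.sqrt_sq (by norm_num)]

theorem hasDerivAt_F {ρ : ℝ} (hρ : 1 < ρ) :
    HasDerivAt F (-(4 * √2 * π * (ρ * (ρ - 1)) * √(ρ * (ρ - 1)) / (2 * ρ - 1))) ρ := by
  have hu : 0 < ρ * (ρ - 1) := by nlinarith
  have hu' : HasDerivAt (fun x : ℝ => x * (x - 1)) (2 * ρ - 1) ρ :=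
    ((hasDerivAt_id' ρ).mul ((hasDerivAt_id' ρ).sub_const 1)).congr_deriv (by ring)
  have hpoly : HasDerivAt (fun x : ℝ => 3 - 4 * x * (x - 1)) (-(4 * (2 * ρ - 1))) ρ := by
    simpa [mul_assoc] using (hu'.const_mul 4).const_sub 3
  have hsqrt := hu'.sqrt hu.ne'
  have habs : |1 - 2 * ρ| = 2 * ρ - 1 := by rw [abs_of_neg (by linarith)]; ring
  have hsec := (hasDerivAt_arcsec (x := 1 - 2 * ρ) (by rw [habs]; linarith)).comp ρ
    ((hasDerivAt_id' ρ).const_mul 2 |>.const_sub 1)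
  have h := ((hpoly.mul hsqrt).const_mul (π / √18)).add (hsec.const_mul (π / √8))
  refine (h.congr_deriv ?_).congr_of_eventuallyEq (.of_forall fun x => by simp [F, mul_assoc])
  have hs2 : √(ρ * (ρ - 1)) ^ 2 = ρ * (ρ - 1) := Real.sq_sqrt hu.le
  have hs : 0 < √(ρ * (ρ - 1)) := Real.sqrt_pos.2 hu
  have hdisc : √((1 - 2 * ρ) ^ 2 - 1) = 2 * √(ρ * (ρ - 1)) := by
    rw [← Real.sqrt_sq (by positivity : (0 : ℝ) ≤ 2 * √(ρ * (ρ - 1))), mul_pow, hs2]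
    ring_nf
  have h2 : √2 ^ 2 = 2 := Real.sq_sqrt (by norm_num)
  have h2pos : 0 < √2 := by positivity
  have h21 : 0 < 2 * ρ - 1 := by linarith
  rw [habs, hdisc, sqrt_eighteen, sqrt_eight]
  generalize √(ρ * (ρ - 1)) = s at hs hs2 ⊢
  field_simp
  -- with `s² = u`, both sides equal `-48 u²`
  linear_combination
    (24 * ρ * (ρ - 1) * s ^ 2) * h2 + (48 * ρ * (ρ - 1) - 8 * (2 * ρ - 1) ^ 2) * hs2

theorem continuousOn_F : ContinuousOn F (Set.Ici 1) := by
  refine (Continuous.continuousOn (by fun_prop)).add (continuousOn_const.mul ?_)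
  exact continuousOn_arcsec.comp (by fun_prop) fun x (hx : 1 ≤ x) => by
    simp only [Set.mem_compl_iff, Set.mem_singleton_iff]; linarith

theorem strictAntiOn_F : StrictAntiOn F (Set.Ici 1) := by
  refine strictAntiOn_of_deriv_neg (convex_Ici 1) continuousOn_F fun ρ hρ => ?_
  rw [interior_Ici, Set.mem_Ioi] at hρ
  have hu : 0 < ρ * (ρ - 1) := by nlinarith
  rw [(hasDerivAt_F hρ).deriv, neg_lt_zero]
  exact div_pos (by positivity) (by linarith)

theorem F_one : F 1 = π ^ 2 / (2 * √2) := by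
  norm_num [F, arcsec_neg_one, sqrt_eight]
  ring

theorem tendsto_F_atTop : Tendsto F atTop atBot := by
  have hu : Tendsto (fun ρ : ℝ => ρ * (ρ - 1)) atTop atTop :=
    tendsto_id.atTop_mul_atTop₀ (tendsto_atTop_add_const_right _ (-1) tendsto_id)
  have hpoly : Tendsto (fun ρ : ℝ => 3 - 4 * ρ * (ρ - 1)) atTop atBot := by
    simpa [mul_assoc, sub_eq_add_neg] using
      tendsto_atBot_add_const_left _ 3 (tendsto_neg_atTop_atBot.comp (hu.const_mul_atTop four_pos))
  have hmain := ((hpoly.atBot_mul_atTop₀ (tendsto_sqrt_atTop.comp hu)).const_mul_atBot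
    (by positivity : 0 < π / √18))
  refine tendsto_atBot_mono (fun ρ => ?_) (tendsto_atBot_add_const_right _ (π / √8 * π) hmain)
  have := mul_le_mul_of_nonneg_left (arcsec_le_pi (1 - 2 * ρ)) (by positivity : 0 ≤ π / √8)
  simp only [F, Function.comp, mul_assoc] at this ⊢
  linarith

/-- `F` is strictly decreasing on `[1, ∞)`, `F(1) = π²/(2√2)`, and `F(ρ) → −∞` as `ρ → ∞`. -/
theorem stmt_3 :
    StrictAntiOn F (Set.Ici 1) ∧ F 1 = π ^ 2 / (2 * Real.sqrt 2) ∧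
      Tendsto F atTop atBot :=
  ⟨strictAntiOn_F, F_one, tendsto_F_atTop⟩
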